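/- arXiv:1608.03513 — 4 statements merged into one kernel-verified Lean document; each statement's English description precedes it below -/
import Mathlib

section
/- Let 2 < n < ω and let B ∈ CA_ω be locally finite, i.e., every b ∈ B has finite dimension set Δb = {i < ω : c_i b ≠ b}. Then Nr_n B is a complete subalgebra of B: for every S ⊆ Nr_n B and every y ∈ Nr_n B, if y is the supremum of S computed in Nr_n B, then y is the supremum of S computed in B. -/
/-- Tarskian cylindric algebra operations indexed by `I` on a Boolean algebra `A`. -/
structure CylStruct (I : Type) (A : Type) [BooleanAlgebra A] where
  c : I → A → A
  d : I → I → A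
  c_bot : ∀ i, c i ⊥ = ⊥
  le_c : ∀ i x, x ≤ c i x
  c_inf_c : ∀ i x y, c i (x ⊓ c i y) = c i x ⊓ c i y
  c_comm : ∀ i j x, c i (c j x) = c j (c i x)
  d_diag : ∀ i, d i i = ⊤
  d_exch : ∀ i j k, k ≠ i → k ≠ j → d i j = c k (d i k ⊓ d k j)
  d_cell : ∀ i j x, i ≠ j → c i (d i j ⊓ x) ⊓ c i (d i j ⊓ xᶜ) = ⊥

/-- A bundled cylindric algebra with index type `I`. -/
structure CAlg (I : Type) : Type 1 where
  carrier : Type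
  [ba : BooleanAlgebra carrier]
  str : CylStruct I carrier

attribute [instance] CAlg.ba

/-- The set of `n`-neat elements of an `ω`-dimensional cylindric algebra. -/
def nrSetNat (n : ℕ) {B : Type} [BooleanAlgebra B] (cB : CylStruct ℕ B) : Set B :=
  {b | ∀ i : ℕ, n ≤ i → cB.c i b = b}

/-- The set of `n`-neat elements of an `m`-dimensional cylindric algebra. -/
def nrSetFin {m : ℕ} (n : ℕ) {B : Type} [BooleanAlgebra B] (cB : CylStruct (Fin m) B) : Set B :=
  {b | ∀ i : Fin m, n ≤ (i : ℕ) → cB.c i b = b}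

/-- `f` is a homomorphism of Boolean algebras. -/
structure IsBoolHom {A B : Type} [BooleanAlgebra A] [BooleanAlgebra B] (f : A → B) : Prop where
  map_bot : f ⊥ = ⊥
  map_top : f ⊤ = ⊤
  map_sup : ∀ x y, f (x ⊔ y) = f x ⊔ f y
  map_inf : ∀ x y, f (x ⊓ y) = f x ⊓ f y
  map_compl : ∀ x, f xᶜ = (f x)ᶜ

/-- A neat embedding of an `n`-dimensional algebra into (the `n`-neat part of) an
`ω`-dimensional one. -/
structure IsNeatEmbedNat (n : ℕ) {A B : Type} [BooleanAlgebra A] [BooleanAlgebra B]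
    (cA : CylStruct (Fin n) A) (cB : CylStruct ℕ B) (f : A → B) : Prop where
  bool : IsBoolHom f
  inj : Function.Injective f
  map_c : ∀ (i : Fin n) (x : A), f (cA.c i x) = cB.c (i : ℕ) (f x)
  map_d : ∀ i j : Fin n, f (cA.d i j) = cB.d (i : ℕ) (j : ℕ)
  range_sub : Set.range f ⊆ nrSetNat n cB

/-- A neat embedding of an `n`-dimensional algebra into (the `n`-neat part of) an
`m`-dimensional one. -/
structure IsNeatEmbedFin {m : ℕ} (n : ℕ) (h : n ≤ m) {A B : Type} [BooleanAlgebra A]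
    [BooleanAlgebra B] (cA : CylStruct (Fin n) A) (cB : CylStruct (Fin m) B)
    (f : A → B) : Prop where
  bool : IsBoolHom f
  inj : Function.Injective f
  map_c : ∀ (i : Fin n) (x : A), f (cA.c i x) = cB.c (Fin.castLE h i) (f x)
  map_d : ∀ i j : Fin n, f (cA.d i j) = cB.d (Fin.castLE h i) (Fin.castLE h j)
  range_sub : Set.range f ⊆ nrSetFin n cB

/-- `A ∈ Nr_n CA_ω`. -/
def InNrNat (n : ℕ) {A : Type} [BooleanAlgebra A] (cA : CylStruct (Fin n) A) : Prop :=
  ∃ (B : CAlg ℕ) (f : A → B.carrier),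
    IsNeatEmbedNat n cA B.str f ∧ Set.range f = nrSetNat n B.str

/-- `A ∈ S Nr_n CA_ω`. -/
def InSNrNat (n : ℕ) {A : Type} [BooleanAlgebra A] (cA : CylStruct (Fin n) A) : Prop :=
  ∃ (B : CAlg ℕ) (f : A → B.carrier), IsNeatEmbedNat n cA B.str f

/-- `A ∈ S_c Nr_n CA_ω`: `A` is a complete subalgebra of an `n`-neat reduct of a `CA_ω`. -/
def InScNrNat (n : ℕ) {A : Type} [BooleanAlgebra A] (cA : CylStruct (Fin n) A) : Prop :=
  ∃ (B : CAlg ℕ) (f : A → B.carrier), IsNeatEmbedNat n cA B.str f ∧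
    ∀ S : Set A, IsLUB S ⊤ → ∀ b ∈ nrSetNat n B.str, (∀ s ∈ S, f s ≤ b) → b = ⊤

/-- `A ∈ Nr_n CA_m`. -/
def InNrFin (n m : ℕ) (h : n ≤ m) {A : Type} [BooleanAlgebra A]
    (cA : CylStruct (Fin n) A) : Prop :=
  ∃ (B : CAlg (Fin m)) (f : A → B.carrier),
    IsNeatEmbedFin n h cA B.str f ∧ Set.range f = nrSetFin n B.str

/-- `A ∈ S Nr_n CA_m`. -/
def InSNrFin (n m : ℕ) (h : n ≤ m) {A : Type} [BooleanAlgebra A]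
    (cA : CylStruct (Fin n) A) : Prop :=
  ∃ (B : CAlg (Fin m)) (f : A → B.carrier), IsNeatEmbedFin n h cA B.str f

/-- `A ∈ S_c Nr_n CA_m`. -/
def InScNrFin (n m : ℕ) (h : n ≤ m) {A : Type} [BooleanAlgebra A]
    (cA : CylStruct (Fin n) A) : Prop :=
  ∃ (B : CAlg (Fin m)) (f : A → B.carrier), IsNeatEmbedFin n h cA B.str f ∧
    ∀ S : Set A, IsLUB S ⊤ → ∀ b ∈ nrSetFin n B.str, (∀ s ∈ S, f s ≤ b) → b = ⊤

/-- Relativized cylindrification on sets of `n`-sequences. -/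
def cylOp {n : ℕ} {U : Type} (V : Set (Fin n → U)) (i : Fin n) (X : Set (Fin n → U)) :
    Set (Fin n → U) :=
  {s ∈ V | ∃ t ∈ X, ∀ j, j ≠ i → t j = s j}

/-- Relativized diagonal element. -/
def diagSet {n : ℕ} {U : Type} (V : Set (Fin n → U)) (i j : Fin n) : Set (Fin n → U) :=
  {s ∈ V | s i = s j}

/-- `V` is a generalized cylindric space unit: a disjoint union of cartesian squares. -/
def IsGsUnit {n : ℕ} {U : Type} (V : Set (Fin n → U)) : Prop :=
  ∃ 𝒦 : Set (Set U), (∀ W ∈ 𝒦, W.Nonempty) ∧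
    (∀ W ∈ 𝒦, ∀ W' ∈ 𝒦, W ≠ W' → Disjoint W W') ∧
    V = ⋃ W ∈ 𝒦, {s | ∀ i, s i ∈ W}

/-- `f` represents the cylindric algebra `cA` as a set algebra with top element `V`. -/
structure IsRepOn {n : ℕ} {A : Type} [BooleanAlgebra A] (cA : CylStruct (Fin n) A)
    {U : Type} (V : Set (Fin n → U)) (f : A → Set (Fin n → U)) : Prop where
  inj : Function.Injective f
  map_top : f ⊤ = V
  map_bot : f ⊥ = ∅
  map_sup : ∀ x y, f (x ⊔ y) = f x ∪ f y
  map_compl : ∀ x, f xᶜ = V \ f x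
  map_c : ∀ i x, f (cA.c i x) = cylOp V i (f x)
  map_d : ∀ i j, f (cA.d i j) = diagSet V i j

/-- `A ∈ RCA_n` : `A` is representable as a generalized cylindric set algebra. -/
def Representable (n : ℕ) {A : Type} [BooleanAlgebra A] (cA : CylStruct (Fin n) A) : Prop :=
  ∃ (U : Type) (V : Set (Fin n → U)) (f : A → Set (Fin n → U)),
    IsGsUnit V ∧ IsRepOn cA V f

/-- `A ∈ CRCA_n` : completely representable. -/
def CompletelyRepresentable (n : ℕ) {A : Type} [BooleanAlgebra A]
    (cA : CylStruct (Fin n) A) : Prop :=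
  ∃ (U : Type) (V : Set (Fin n → U)) (f : A → Set (Fin n → U)),
    IsGsUnit V ∧ IsRepOn cA V f ∧
    ∀ (S : Set A) (a : A), IsLUB S a → f a = ⋃ s ∈ S, f s

/-- Cylindrification of the complex algebra over the atom structure of `A`. -/
def cmC {n : ℕ} {A : Type} [BooleanAlgebra A] (cA : CylStruct (Fin n) A) (i : Fin n)
    (S : Set {a : A // IsAtom a}) : Set {a : A // IsAtom a} :=
  {a | ∃ b ∈ S, a.1 ≤ cA.c i b.1}

/-- Diagonal elements of the complex algebra over the atom structure of `A`. -/
def cmD {n : ℕ} {A : Type} [BooleanAlgebra A] (cA : CylStruct (Fin n) A) (i j : Fin n) :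
    Set {a : A // IsAtom a} :=
  {a | a.1 ≤ cA.d i j}

/-- `cCm` is the complex algebra `Cm At A` of the atomic algebra `A`. -/
def IsComplexAlgebraOf {n : ℕ} {A : Type} [BooleanAlgebra A] (cA : CylStruct (Fin n) A)
    (cCm : CylStruct (Fin n) (Set {a : A // IsAtom a})) : Prop :=
  (∀ i S, cCm.c i S = cmC cA i S) ∧ (∀ i j, cCm.d i j = cmD cA i j)

/-- A cylindric algebra is simple if its only ideals are `{⊥}` and the whole algebra. -/
def IsSimple {n : ℕ} {A : Type} [BooleanAlgebra A] (cA : CylStruct (Fin n) A) : Prop :=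
  ∀ I : Set A, ⊥ ∈ I → (∀ x ∈ I, ∀ y ∈ I, x ⊔ y ∈ I) → (∀ x ∈ I, ∀ y, y ≤ x → y ∈ I) →
    (∀ x ∈ I, ∀ i, cA.c i x ∈ I) → I = {⊥} ∨ I = Set.univ

/-- An ultrafilter of a Boolean algebra. -/
def IsBoolUltrafilter {A : Type} [BooleanAlgebra A] (F : Set A) : Prop :=
  ⊤ ∈ F ∧ ⊥ ∉ F ∧ (∀ x ∈ F, ∀ y ∈ F, x ⊓ y ∈ F) ∧
    (∀ x ∈ F, ∀ y, x ≤ y → y ∈ F) ∧ (∀ x : A, x ∈ F ∨ xᶜ ∈ F)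

/-
In a locally finite `CA_ω` every `x` has a least `n`-neat upper bound, namely the
cylindrification of `x` along the finitely many directions `i ≥ n` of its dimension set;
dually, every `b` has a greatest `n`-neat lower bound. If `b` bounds `S ⊆ Nr_n B` from above
in `B`, then so does that greatest neat element below `b`, which therefore lies above the
supremum `y` of `S` computed in `Nr_n B`.
-/

namespace CylStruct

variable {I B : Type} [BooleanAlgebra B] (cB : CylStruct I B)

lemma c_mono (i : I) {x y : B} (h : x ≤ y) : cB.c i x ≤ cB.c i y := by
  have key := cB.c_inf_c i x y
  rw [inf_eq_left.mpr (h.trans (cB.le_c i y))] at key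
  exact key ▸ inf_le_right

lemma c_idem (i : I) (x : B) : cB.c i (cB.c i x) = cB.c i x := by
  have key := cB.c_inf_c i (cB.c i x) x
  rw [inf_idem] at key
  exact le_antisymm (key ▸ inf_le_right) (cB.le_c i _)

lemma c_compl_of_c_eq {i : I} {x : B} (h : cB.c i x = x) : cB.c i xᶜ = xᶜ := by
  have hdisj : cB.c i xᶜ ⊓ x = ⊥ := by
    calc cB.c i xᶜ ⊓ x = cB.c i (xᶜ ⊓ cB.c i x) := by rw [cB.c_inf_c, h]
    _ = ⊥ := by rw [h, compl_inf_eq_bot, cB.c_bot]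
  exact le_antisymm (le_compl_iff_disjoint_right.mpr (disjoint_iff.mpr hdisj)) (cB.le_c i _)

lemma c_compl_eq_iff {i : I} {x : B} : cB.c i xᶜ = xᶜ ↔ cB.c i x = x :=
  ⟨fun h => by simpa using cB.c_compl_of_c_eq h, cB.c_compl_of_c_eq⟩

end CylStruct

section NeatReduct

variable {B : Type} [BooleanAlgebra B] (cB : CylStruct ℕ B) (n : ℕ)

lemma compl_mem_nrSetNat {x : B} (hx : x ∈ nrSetNat n cB) : xᶜ ∈ nrSetNat n cB :=
  fun i hi => cB.c_compl_of_c_eq (hx i hi)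

lemma neat_upper_bounds_c {k : ℕ} (hk : n ≤ k) (x : B) :
    {e ∈ nrSetNat n cB | cB.c k x ≤ e} = {e ∈ nrSetNat n cB | x ≤ e} := by
  ext e
  refine and_congr_right fun he => ⟨(cB.le_c k x).trans, fun hxe => ?_⟩
  exact he k hk ▸ cB.c_mono k hxe

lemma exists_isLeast_neat_ge_of_subset (Γ : Finset ℕ) :
    ∀ x : B, {i | n ≤ i ∧ cB.c i x ≠ x} ⊆ Γ →
      ∃ e, IsLeast {e ∈ nrSetNat n cB | x ≤ e} e := by
  induction Γ using Finset.induction_on with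
  | empty =>
    intro x hx
    refine ⟨x, ⟨fun i hi => ?_, le_rfl⟩, fun e he => he.2⟩
    by_contra hne
    simpa using hx ⟨hi, hne⟩
  | insert k Γ _ ih =>
    intro x hx
    by_cases hk : n ≤ k
    · -- `c k x` has the same neat upper bounds as `x`, and its dimension set loses `k`.
      rw [← neat_upper_bounds_c cB n hk]
      refine ih _ fun i ⟨hi, hne⟩ => ?_
      have hik : i ≠ k := by rintro rfl; exact hne (cB.c_idem i x)
      have hix : cB.c i x ≠ x := fun h => hne (by rw [cB.c_comm, h])
      simpa [hik] using hx ⟨hi, hix⟩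
    · refine ih x fun i ⟨hi, hne⟩ => ?_
      have hik : i ≠ k := by rintro rfl; exact hk hi
      simpa [hik] using hx ⟨hi, hne⟩

lemma exists_isLeast_neat_ge {x : B} (hx : {i | cB.c i x ≠ x}.Finite) :
    ∃ e, IsLeast {e ∈ nrSetNat n cB | x ≤ e} e :=
  exists_isLeast_neat_ge_of_subset cB n hx.toFinset x fun i hi => by simpa using hi.2

lemma exists_isGreatest_neat_le {b : B} (hb : {i | cB.c i b ≠ b}.Finite) :
    ∃ a, IsGreatest {a ∈ nrSetNat n cB | a ≤ b} a := by
  have hbc : {i | cB.c i bᶜ ≠ bᶜ}.Finite := by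
    convert hb using 1
    exact Set.ext fun i => not_congr cB.c_compl_eq_iff
  obtain ⟨e, ⟨he, hbe⟩, hleast⟩ := exists_isLeast_neat_ge cB n hbc
  refine ⟨eᶜ, ⟨compl_mem_nrSetNat cB n he, compl_le_iff_compl_le.mp hbe⟩, fun a ⟨ha, hab⟩ => ?_⟩
  exact le_compl_comm.mp (hleast ⟨compl_mem_nrSetNat cB n ha, compl_le_compl hab⟩)

end NeatReduct

theorem nr_complete_subalgebra_of_locally_finite_general {B : Type} [BooleanAlgebra B] (n : ℕ)
    (cB : CylStruct ℕ B)
    (hlf : ∀ b : B, {i : ℕ | cB.c i b ≠ b}.Finite)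
    (S : Set B) (hS : S ⊆ nrSetNat n cB) (y : B)
    (hub : ∀ s ∈ S, s ≤ y)
    (hlub : ∀ b ∈ nrSetNat n cB, (∀ s ∈ S, s ≤ b) → y ≤ b) :
    IsLUB S y := by
  refine ⟨hub, fun b hb => ?_⟩
  obtain ⟨a, ⟨ha, hab⟩, hgreatest⟩ := exists_isGreatest_neat_le cB n (hlf b)
  exact (hlub a ha fun s hs => hgreatest ⟨hS hs, hb hs⟩).trans hab

/-- Let `2 < n < ω` and let `B ∈ CA_ω` be locally finite (every element
has a finite dimension set `Δb = {i | c_i b ≠ b}`).  Then `Nr_n B` is a complete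
subalgebra of `B`: if `S` is a set of `n`-neat elements and `y` is an `n`-neat element
which is the supremum of `S` computed within the neat reduct `Nr_n B`, then `y` is the
supremum of `S` computed in `B`. -/
theorem nr_complete_subalgebra_of_locally_finite {B : Type} [BooleanAlgebra B] (n : ℕ)
    (hn : 2 < n) (cB : CylStruct ℕ B)
    (hlf : ∀ b : B, {i : ℕ | cB.c i b ≠ b}.Finite)
    (S : Set B) (hS : S ⊆ nrSetNat n cB) (y : B) (hy : y ∈ nrSetNat n cB)
    (hub : ∀ s ∈ S, s ≤ y)
    (hlub : ∀ b ∈ nrSetNat n cB, (∀ s ∈ S, s ≤ b) → y ≤ b) :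
    IsLUB S y :=
  nr_complete_subalgebra_of_locally_finite_general n cB hlf S hS y hub hlub
end

section
/- Let 2 < n < m < ω. If A ∈ CA_n has an m-square representation and h : A → B is a surjective homomorphism of CA_n's, then B has an m-square representation. (Together with closure under subalgebras and products, the class of CA_n's having m-square representations is a variety.) -/
/-- `C` is an `n`-clique for the unit `V`: every `n`-tuple of distinct elements of `C`
lies in `V`. -/
def IsNClique {n : ℕ} {U : Type} (V : Set (Fin n → U)) (C : Set U) : Prop :=
  ∀ s : Fin n → U, (∀ i, s i ∈ C) → Function.Injective s → s ∈ V

/-- `C^m(M)`: the `m`-tuples whose range is an `n`-clique. -/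
def CliqueTuples (n m : ℕ) {U : Type} (V : Set (Fin n → U)) : Set (Fin m → U) :=
  {s | IsNClique V (Set.range s)}

/-- The base of the representation is the union of the ranges of sequences in `V`. -/
def BaseIsUnion {n : ℕ} {U : Type} (V : Set (Fin n → U)) : Prop :=
  ∀ u : U, ∃ s ∈ V, ∃ i, s i = u

/-- The representation `f` of `cA` on the unit `V` is `m`-square. -/
def IsMSquare (n m : ℕ) {A : Type} [BooleanAlgebra A] (cA : CylStruct (Fin n) A)
    {U : Type} (V : Set (Fin n → U)) (f : A → Set (Fin n → U)) : Prop :=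
  ∀ s ∈ CliqueTuples n m V, ∀ (a : A) (i : Fin n) (l : Fin n → Fin m),
    Function.Injective l → (s ∘ l) ∈ f (cA.c i a) →
    ∃ t ∈ CliqueTuples n m V, (∀ j, j ≠ l i → t j = s j) ∧ (t ∘ l) ∈ f a

/-- A homomorphism of cylindric algebras of the same dimension. -/
structure IsCylHom {I : Type} {A B : Type} [BooleanAlgebra A] [BooleanAlgebra B]
    (cA : CylStruct I A) (cB : CylStruct I B) (f : A → B) : Prop where
  bool : IsBoolHom f
  map_c : ∀ i x, f (cA.c i x) = cB.c i (f x)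
  map_d : ∀ i j, f (cA.d i j) = cB.d i j

/-!
Let `I` be the kernel of `h`. Take the ultrapower of an `m`-square representation of `A` along an
ultrafilter on the finite subsets of `I` that refines `atTop`. It is again an `m`-square
representation, and it is saturated enough that for every `a ∉ I` some tuple of the image of `a`
lies in the image of no element of `I`. Now delete from the unit every tuple in the image of an
element of `I`. Since `I` is closed under cylindrifications, this is again an `m`-square
representation (cliques survive because whether a tuple of the old unit survives depends on
any single one of its entries), and its kernel is exactly `I`, so it factors through `h`.
Finally, shrink the base to the points that occur in the unit.
-/

open Set Filter Function

structure IsSetHom {n : ℕ} {A : Type} [BooleanAlgebra A] (cA : CylStruct (Fin n) A)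
    {U : Type} (V : Set (Fin n → U)) (f : A → Set (Fin n → U)) : Prop where
  map_top : f ⊤ = V
  map_sup : ∀ x y, f (x ⊔ y) = f x ∪ f y
  map_compl : ∀ x, f xᶜ = V \ f x
  map_c : ∀ i x, f (cA.c i x) = cylOp V i (f x)
  map_d : ∀ i j, f (cA.d i j) = diagSet V i j

section SetHom

variable {n : ℕ} {A : Type} [BooleanAlgebra A] {cA : CylStruct (Fin n) A} {U : Type}
  {V : Set (Fin n → U)} {f : A → Set (Fin n → U)}

theorem IsRepOn.isSetHom (hf : IsRepOn cA V f) : IsSetHom cA V f :=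
  ⟨hf.map_top, hf.map_sup, hf.map_compl, hf.map_c, hf.map_d⟩

namespace IsSetHom

theorem subset_unit (hf : IsSetHom cA V f) (a : A) : f a ⊆ V := by
  rw [← compl_compl a, hf.map_compl]
  exact sdiff_subset

theorem map_bot (hf : IsSetHom cA V f) : f ⊥ = ∅ := by
  rw [← compl_top, hf.map_compl, hf.map_top, sdiff_self]

theorem map_inf (hf : IsSetHom cA V f) (x y : A) : f (x ⊓ y) = f x ∩ f y := by
  rw [← compl_compl (x ⊓ y), compl_inf, hf.map_compl, hf.map_sup, hf.map_compl, hf.map_compl,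
    ← sdiff_inter, sdiff_sdiff_cancel_left (inter_subset_left.trans (hf.subset_unit x))]

theorem map_inf_compl (hf : IsSetHom cA V f) (x y : A) : f (x ⊓ yᶜ) = f x \ f y := by
  rw [hf.map_inf, hf.map_compl, ← inter_sdiff_assoc, inter_eq_left.2 (hf.subset_unit x)]

theorem monotone (hf : IsSetHom cA V f) : Monotone f := fun x y hxy => by
  rw [← inf_eq_left.2 hxy, hf.map_inf]
  exact inter_subset_right

theorem toRepOn (hf : IsSetHom cA V f) (hinj : Injective f) : IsRepOn cA V f :=
  ⟨hinj, hf.map_top, hf.map_bot, hf.map_sup, hf.map_compl, hf.map_c, hf.map_d⟩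

/-- `V = f (d j j) = f (c i (d j i ⊓ d i j))` by `d_exch`. -/
theorem update_mem (hf : IsSetHom cA V f) {s : Fin n → U} (hs : s ∈ V) {i j : Fin n}
    (hij : i ≠ j) : update s i (s j) ∈ V := by
  have hV : V = cylOp V i (f (cA.d j i ⊓ cA.d i j)) := by
    rw [← hf.map_c, ← cA.d_exch j j i hij hij, cA.d_diag, hf.map_top]
  rw [hV, hf.map_inf, hf.map_d, hf.map_d] at hs
  obtain ⟨-, t, ⟨⟨htV, -⟩, -, hti⟩, hts⟩ := hs
  convert htV using 1
  ext k
  rcases eq_or_ne k i with rfl | hk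
  · rw [update_self, hti, hts j hij.symm]
  · rw [update_of_ne hk, hts k hk]

end IsSetHom

end SetHom

theorem mem_cliqueTuples_iff {n m : ℕ} {U : Type} {V : Set (Fin n → U)} {s : Fin m → U} :
    s ∈ CliqueTuples n m V ↔ ∀ q : Fin n → Fin m, Injective (s ∘ q) → s ∘ q ∈ V := by
  refine ⟨fun hs q hq => hs _ (fun k => mem_range_self (q k)) hq, fun hs v hv hinj => ?_⟩
  choose q hq using hv
  obtain rfl : s ∘ q = v := funext hq
  exact hs q hinj

section Ultrapower

variable {ι U : Type} (D : Ultrafilter ι) {k n m : ℕ}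

def germTuple (S : ι → Fin k → U) : Fin k → (D : Filter ι).Germ U :=
  fun j => ((fun x => S x j : ι → U) : (D : Filter ι).Germ U)

def ultrapowerSet (X : Set (Fin k → U)) : Set (Fin k → (D : Filter ι).Germ U) :=
  germTuple D '' {S | ∀ᶠ x in D, S x ∈ X}

variable {D}

theorem germTuple_surjective : Surjective (germTuple (U := U) D (k := k)) := by
  intro s
  choose S hS using fun j => Quot.exists_rep (s j)
  exact ⟨fun x j => S j x, funext hS⟩

theorem germTuple_apply_eq_iff {S T : ι → Fin k → U} {j j' : Fin k} :
    germTuple D S j = germTuple D T j' ↔ ∀ᶠ x in D, S x j = T x j' :=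
  Germ.coe_eq

theorem germTuple_eq_iff {S T : ι → Fin k → U} :
    germTuple D S = germTuple D T ↔ ∀ᶠ x in D, S x = T x := by
  simp only [funext_iff, germTuple_apply_eq_iff, eventually_all]

theorem germTuple_mem_ultrapowerSet {S : ι → Fin k → U} {X : Set (Fin k → U)} :
    germTuple D S ∈ ultrapowerSet D X ↔ ∀ᶠ x in D, S x ∈ X := by
  refine ⟨?_, fun hS => ⟨S, hS, rfl⟩⟩
  rintro ⟨T, hT, hTS⟩
  filter_upwards [hT, germTuple_eq_iff.1 hTS] with x hx hTSx
  rwa [← hTSx]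

theorem ultrapowerSet_union (X Y : Set (Fin k → U)) :
    ultrapowerSet D (X ∪ Y) = ultrapowerSet D X ∪ ultrapowerSet D Y := by
  ext s
  obtain ⟨S, rfl⟩ := germTuple_surjective s
  simp only [mem_union, germTuple_mem_ultrapowerSet, Ultrafilter.eventually_or]

theorem ultrapowerSet_sdiff (X Y : Set (Fin k → U)) :
    ultrapowerSet D (X \ Y) = ultrapowerSet D X \ ultrapowerSet D Y := by
  ext s
  obtain ⟨S, rfl⟩ := germTuple_surjective s
  simp only [Set.mem_sdiff, germTuple_mem_ultrapowerSet, eventually_and, Ultrafilter.eventually_not]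

theorem ultrapowerSet_cylOp (V X : Set (Fin n → U)) (i : Fin n) :
    ultrapowerSet D (cylOp V i X) = cylOp (ultrapowerSet D V) i (ultrapowerSet D X) := by
  ext s
  obtain ⟨S, rfl⟩ := germTuple_surjective s
  simp only [cylOp, mem_ofPred_eq, germTuple_mem_ultrapowerSet, eventually_and]
  refine and_congr_right fun _ => ⟨fun hS => ?_, ?_⟩
  · obtain ⟨T, hT⟩ := hS.choice
    refine ⟨germTuple D T, germTuple_mem_ultrapowerSet.2 (hT.mono fun _ => And.left),
      fun j hj => germTuple_apply_eq_iff.2 (hT.mono fun _ hx => hx.2 j hj)⟩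
  · rintro ⟨t, htX, hts⟩
    obtain ⟨T, rfl⟩ := germTuple_surjective t
    have hagree : ∀ᶠ x in D, ∀ j, j ≠ i → T x j = S x j :=
      (eventually_all.2 fun j => by
        by_cases hj : j = i
        · exact univ_mem' fun _ hj' => absurd hj hj'
        · exact (germTuple_apply_eq_iff.1 (hts j hj)).mono fun _ hx _ => hx)
    filter_upwards [germTuple_mem_ultrapowerSet.1 htX, hagree] with x hx hagree_x
    exact ⟨T x, hx, hagree_x⟩

theorem ultrapowerSet_diagSet (V : Set (Fin n → U)) (i j : Fin n) :
    ultrapowerSet D (diagSet V i j) = diagSet (ultrapowerSet D V) i j := by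
  ext s
  obtain ⟨S, rfl⟩ := germTuple_surjective s
  simp only [diagSet, mem_ofPred_eq, germTuple_mem_ultrapowerSet, eventually_and,
    germTuple_apply_eq_iff]

theorem IsSetHom.ultrapower {A : Type} [BooleanAlgebra A] {cA : CylStruct (Fin n) A}
    {V : Set (Fin n → U)} {f : A → Set (Fin n → U)} (hf : IsSetHom cA V f) (D : Ultrafilter ι) :
    IsSetHom cA (ultrapowerSet D V) (ultrapowerSet D ∘ f) where
  map_top := by rw [comp_apply, hf.map_top]
  map_sup x y := by rw [comp_apply, hf.map_sup, ultrapowerSet_union]; rfl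
  map_compl x := by rw [comp_apply, hf.map_compl, ultrapowerSet_sdiff]; rfl
  map_c i x := by rw [comp_apply, hf.map_c, ultrapowerSet_cylOp]; rfl
  map_d i j := by rw [comp_apply, hf.map_d, ultrapowerSet_diagSet]

theorem injective_germTuple_iff {S : ι → Fin n → U} :
    Injective (germTuple D S) ↔ ∀ᶠ x in D, Injective (S x) := by
  simp only [Injective, germTuple_apply_eq_iff, eventually_all, Ultrafilter.eventually_imp,
    eventually_const]

theorem germTuple_mem_cliqueTuples_iff {V : Set (Fin n → U)} {S : ι → Fin m → U} :
    germTuple D S ∈ CliqueTuples n m (ultrapowerSet D V) ↔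
      ∀ᶠ x in D, S x ∈ CliqueTuples n m V := by
  have hcomp : ∀ q : Fin n → Fin m, germTuple D S ∘ q = germTuple D (fun x => S x ∘ q) :=
    fun _ => rfl
  simp only [mem_cliqueTuples_iff, hcomp, injective_germTuple_iff, germTuple_mem_ultrapowerSet,
    ← Ultrafilter.eventually_imp, eventually_all]

theorem IsMSquare.ultrapower {A : Type} [BooleanAlgebra A] {cA : CylStruct (Fin n) A}
    {V : Set (Fin n → U)} {f : A → Set (Fin n → U)} (hf : IsMSquare n m cA V f)
    (D : Ultrafilter ι) : IsMSquare n m cA (ultrapowerSet D V) (ultrapowerSet D ∘ f) := by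
  intro s hs a i l hl hsl
  obtain ⟨S, rfl⟩ := germTuple_surjective s
  have hSl : ∀ᶠ x in D, S x ∘ l ∈ f (cA.c i a) := germTuple_mem_ultrapowerSet.1 hsl
  obtain ⟨T, hT⟩ := ((germTuple_mem_cliqueTuples_iff.1 hs).and hSl).mono
    (fun x hx => hf (S x) hx.1 a i l hl hx.2) |>.choice
  exact ⟨germTuple D T, germTuple_mem_cliqueTuples_iff.2 (hT.mono fun _ => And.left),
    fun j hj => germTuple_apply_eq_iff.2 (hT.mono fun _ hx => hx.2.1 j hj),
    germTuple_mem_ultrapowerSet.2 (hT.mono fun _ hx => hx.2.2)⟩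

end Ultrapower

theorem exists_mem_ultrapowerSet_forall_notMem {J U : Type} {k : ℕ}
    {D : Ultrafilter (Finset J)} (hD : (D : Filter (Finset J)) ≤ atTop) {X : Set (Fin k → U)}
    {Y : J → Set (Fin k → U)} (hfin : ∀ F : Finset J, ∃ p ∈ X, ∀ y ∈ F, p ∉ Y y) :
    ∃ s ∈ ultrapowerSet D X, ∀ y, s ∉ ultrapowerSet D (Y y) := by
  choose p hpX hpY using hfin
  refine ⟨germTuple D p, germTuple_mem_ultrapowerSet.2 (univ_mem' hpX), fun y hy => ?_⟩
  obtain ⟨F, hF, hyF⟩ :=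
    ((germTuple_mem_ultrapowerSet.1 hy).and (hD (eventually_ge_atTop {y}))).exists
  exact hpY F y (Finset.singleton_subset_iff.1 hyF) hF

def avoidingUnit {n : ℕ} {A U : Type} (V : Set (Fin n → U)) (f : A → Set (Fin n → U))
    (I : Set A) : Set (Fin n → U) :=
  {s ∈ V | ∀ y ∈ I, s ∉ f y}

section Avoiding

variable {n m : ℕ} {A : Type} [BooleanAlgebra A] {cA : CylStruct (Fin n) A} {U : Type}
  {V : Set (Fin n → U)} {f : A → Set (Fin n → U)} {I : Set A}

/-- Since `I` is closed under cylindrifications, leaving `avoidingUnit V f I` along an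
`i`-line of `V` would put the starting point into `f (c i y)` for some `y ∈ I`. -/
theorem mem_avoidingUnit_of_agree (hf : IsSetHom cA V f) (hI : ∀ y ∈ I, ∀ i, cA.c i y ∈ I)
    {s t : Fin n → U} (hs : s ∈ avoidingUnit V f I) (ht : t ∈ V) {i : Fin n}
    (hts : ∀ j, j ≠ i → t j = s j) : t ∈ avoidingUnit V f I := by
  refine ⟨ht, fun y hy hty => hs.2 (cA.c i y) (hI y hy i) ?_⟩
  rw [hf.map_c]
  exact ⟨hs.1, t, hty, hts⟩

theorem update_mem_avoidingUnit_iff (hf : IsSetHom cA V f) (hI : ∀ y ∈ I, ∀ i, cA.c i y ∈ I)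
    {s : Fin n → U} (hs : s ∈ V) (i j : Fin n) :
    update s i (s j) ∈ V ∧
      (update s i (s j) ∈ avoidingUnit V f I ↔ s ∈ avoidingUnit V f I) := by
  rcases eq_or_ne i j with rfl | hij
  · simpa using hs
  have hu := hf.update_mem hs hij
  have hagree : ∀ k, k ≠ i → update s i (s j) k = s k := fun k hk => update_of_ne hk _ _
  exact ⟨hu, fun h => mem_avoidingUnit_of_agree hf hI h hs fun k hk => (hagree k hk).symm,
    fun h => mem_avoidingUnit_of_agree hf hI h hu hagree⟩

/-- Copy `s j₀` to the coordinates one at a time: every step stays in `V` and changes a single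
coordinate. -/
theorem mem_avoidingUnit_iff_const (hf : IsSetHom cA V f) (hI : ∀ y ∈ I, ∀ i, cA.c i y ∈ I)
    {s : Fin n → U} (hs : s ∈ V) (j₀ : Fin n) :
    s ∈ avoidingUnit V f I ↔ (fun _ => s j₀) ∈ avoidingUnit V f I := by
  let partialConst (T : Finset (Fin n)) : Fin n → U := fun j => if j ∈ T then s j₀ else s j
  suffices key : ∀ T, partialConst T ∈ V ∧ (partialConst T ∈ avoidingUnit V f I ↔
      s ∈ avoidingUnit V f I) by
    simpa [partialConst] using (key Finset.univ).2.symm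
  intro T
  induction T using Finset.induction_on with
  | empty => simpa [partialConst] using hs
  | insert a T _ ih =>
    have hins : partialConst (insert a T) = update (partialConst T) a (partialConst T j₀) := by
      ext j
      by_cases hja : j = a <;> simp [partialConst, hja]
    rw [hins, ← ih.2]
    exact update_mem_avoidingUnit_iff hf hI ih.1 a j₀

theorem mem_avoidingUnit_iff_of_apply_eq (hf : IsSetHom cA V f)
    (hI : ∀ y ∈ I, ∀ i, cA.c i y ∈ I) {s t : Fin n → U} (hs : s ∈ V) (ht : t ∈ V) {j j' : Fin n}
    (hst : s j = t j') : s ∈ avoidingUnit V f I ↔ t ∈ avoidingUnit V f I := by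
  rw [mem_avoidingUnit_iff_const hf hI hs j, mem_avoidingUnit_iff_const hf hI ht j', hst]

/-- An injective tuple `u` over the clique is linked to `p` through `update u j₀ (p j₀)`, which
shares an entry with each; keeping an entry of `u` besides `p j₀` needs `2 ≤ n`. -/
theorem IsNClique.avoidingUnit_of_mem (hf : IsSetHom cA V f) (hI : ∀ y ∈ I, ∀ i, cA.c i y ∈ I)
    (hn : 2 ≤ n) {C : Set U} (hC : IsNClique V C) {p : Fin n → U} (hp : p ∈ avoidingUnit V f I)
    (hpC : ∀ j, p j ∈ C) : IsNClique (avoidingUnit V f I) C := by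
  intro u huC hu
  have huV := hC u huC hu
  let j₀ : Fin n := ⟨0, by omega⟩
  let j₁ : Fin n := ⟨1, by omega⟩
  by_cases hp₀ : p j₀ ∈ range u
  · obtain ⟨k, hk⟩ := hp₀
    exact (mem_avoidingUnit_iff_of_apply_eq hf hI hp.1 huV hk.symm).1 hp
  let x := update u j₀ (p j₀)
  have hx : Injective x := by
    intro a b hab
    rcases eq_or_ne a j₀ with rfl | ha <;> rcases eq_or_ne b j₀ with rfl | hb
    · rfl
    · simp only [x, update_self, update_of_ne hb] at hab
      exact absurd ⟨b, hab.symm⟩ hp₀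
    · simp only [x, update_self, update_of_ne ha] at hab
      exact absurd ⟨a, hab⟩ hp₀
    · simp only [x, update_of_ne ha, update_of_ne hb] at hab
      exact hu hab
  have hxV : x ∈ V := hC x (fun j => by
    by_cases hj : j = j₀
    · simpa [x, hj] using hpC j₀
    · simpa [x, hj] using huC j) hx
  have hj₁ : j₁ ≠ j₀ := Fin.ne_of_val_ne one_ne_zero
  rw [← mem_avoidingUnit_iff_of_apply_eq hf hI hxV huV (update_of_ne hj₁ _ u),
    ← mem_avoidingUnit_iff_of_apply_eq hf hI hp.1 hxV (update_self j₀ _ u).symm]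
  exact hp

theorem IsSetHom.inter_avoidingUnit (hf : IsSetHom cA V f) (hI : ∀ y ∈ I, ∀ i, cA.c i y ∈ I) :
    IsSetHom cA (avoidingUnit V f I) (fun a => f a ∩ avoidingUnit V f I) where
  map_top := by rw [hf.map_top]; exact inter_eq_right.2 fun _ hs => hs.1
  map_sup x y := by rw [hf.map_sup, union_inter_distrib_right]
  map_compl x := by
    ext s
    simp only [hf.map_compl, mem_inter_iff, Set.mem_sdiff]
    exact ⟨fun h => ⟨h.2, fun h' => h.1.2 h'.1⟩, fun h => ⟨⟨h.1.1, fun h' => h.2 ⟨h', h.1⟩⟩, h.1⟩⟩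
  map_c i x := by
    ext s
    simp only [hf.map_c, cylOp, mem_inter_iff, mem_ofPred_eq]
    refine ⟨fun ⟨⟨_, t, ht, hts⟩, hs⟩ => ⟨hs, t, ⟨ht, ?_⟩, hts⟩,
      fun ⟨hs, t, ⟨ht, _⟩, hts⟩ => ⟨⟨hs.1, t, ht, hts⟩, hs⟩⟩
    exact mem_avoidingUnit_of_agree hf hI hs (hf.subset_unit x ht) hts
  map_d i j := by
    ext s
    simp only [hf.map_d, diagSet, mem_inter_iff, mem_ofPred_eq]
    exact ⟨fun h => ⟨h.2, h.1.2⟩, fun h => ⟨⟨h.1.1, h.2⟩, h.1⟩⟩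

theorem IsMSquare.inter_avoidingUnit (hf : IsSetHom cA V f) (hI : ∀ y ∈ I, ∀ i, cA.c i y ∈ I)
    (hn : 2 ≤ n) (hsq : IsMSquare n m cA V f) :
    IsMSquare n m cA (avoidingUnit V f I) (fun a => f a ∩ avoidingUnit V f I) := by
  rintro s hs a i l hl ⟨hsl, hslI⟩
  obtain ⟨t, ht, hts, htl⟩ := hsq s (fun u hu hinj => (hs u hu hinj).1) a i l hl hsl
  have htlI : t ∘ l ∈ avoidingUnit V f I :=
    mem_avoidingUnit_of_agree hf hI hslI (hf.subset_unit a htl) fun k hk => hts (l k) (hl.ne hk)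
  exact ⟨t, IsNClique.avoidingUnit_of_mem hf hI hn ht htlI fun k => mem_range_self (l k), hts,
    htl, htlI⟩

end Avoiding

section Factor

variable {n m : ℕ} {A B : Type} [BooleanAlgebra A] [BooleanAlgebra B]
  {cA : CylStruct (Fin n) A} {cB : CylStruct (Fin n) B} {h : A → B} {U : Type}
  {V : Set (Fin n → U)}

theorem IsSetHom.subset_iff_of_ker {F : A → Set (Fin n → U)} (hF : IsSetHom cA V F)
    (hh : IsBoolHom h) (hker : ∀ y, F y = ∅ ↔ h y = ⊥) (a a' : A) :
    F a ⊆ F a' ↔ h a ≤ h a' := by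
  rw [← sdiff_eq_empty, ← hF.map_inf_compl, hker, hh.map_inf, hh.map_compl, ← _root_.sdiff_eq,
    sdiff_eq_bot_iff]

theorem IsSetHom.of_comp {g : B → Set (Fin n → U)} (hg : IsSetHom cA V (g ∘ h))
    (hh : IsCylHom cA cB h) (hsurj : Surjective h) : IsSetHom cB V g where
  map_top := by rw [← hh.bool.map_top]; exact hg.map_top
  map_sup := hsurj.forall₂.2 fun x y => by rw [← hh.bool.map_sup]; exact hg.map_sup x y
  map_compl := hsurj.forall.2 fun x => by rw [← hh.bool.map_compl]; exact hg.map_compl x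
  map_c i := hsurj.forall.2 fun x => by rw [← hh.map_c]; exact hg.map_c i x
  map_d i j := by rw [← hh.map_d]; exact hg.map_d i j

theorem IsMSquare.of_comp {g : B → Set (Fin n → U)} (hg : IsMSquare n m cA V (g ∘ h))
    (hh : IsCylHom cA cB h) (hsurj : Surjective h) : IsMSquare n m cB V g := by
  intro s hs b i l hl hsl
  obtain ⟨a, rfl⟩ := hsurj b
  exact hg s hs a i l hl (by rwa [comp_apply, hh.map_c])

theorem IsSetHom.exists_factor_of_ker {F : A → Set (Fin n → U)} (hF : IsSetHom cA V F)
    (hsq : IsMSquare n m cA V F) (hh : IsCylHom cA cB h) (hsurj : Surjective h)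
    (hker : ∀ y, F y = ∅ ↔ h y = ⊥) :
    ∃ g : B → Set (Fin n → U), IsRepOn cB V g ∧ IsMSquare n m cB V g := by
  have hFeq : ∀ a a', F a = F a' ↔ h a = h a' := fun a a' => by
    rw [subset_antisymm_iff, le_antisymm_iff, hF.subset_iff_of_ker hh.bool hker,
      hF.subset_iff_of_ker hh.bool hker]
  have hcomp : (F ∘ surjInv hsurj) ∘ h = F :=
    funext fun a => (hFeq _ a).2 (surjInv_eq hsurj (h a))
  refine ⟨F ∘ surjInv hsurj, (IsSetHom.of_comp (by rwa [hcomp]) hh hsurj).toRepOn ?_,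
    IsMSquare.of_comp (by rwa [hcomp]) hh hsurj⟩
  refine hsurj.forall₂.2 fun a a' haa' => (hFeq a a').1 ?_
  rwa [← congrFun hcomp a, ← congrFun hcomp a']

end Factor

section RestrictBase

variable {n m : ℕ} {A : Type} [BooleanAlgebra A] {cA : CylStruct (Fin n) A} {U : Type}
  {V : Set (Fin n → U)} {f : A → Set (Fin n → U)} {P : Set U}

def restrictTuples {k : ℕ} (P : Set U) (X : Set (Fin k → U)) : Set (Fin k → P) :=
  {s | Subtype.val ∘ s ∈ X}

theorem exists_val_comp_eq {k : ℕ} {s : Fin k → U} (hs : ∀ j, s j ∈ P) :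
    ∃ s' : Fin k → P, Subtype.val ∘ s' = s :=
  ⟨fun j => ⟨s j, hs j⟩, rfl⟩

theorem val_comp_mem_cliqueTuples_iff {s : Fin m → P} :
    Subtype.val ∘ s ∈ CliqueTuples n m V ↔ s ∈ CliqueTuples n m (restrictTuples P V) := by
  simp only [mem_cliqueTuples_iff, restrictTuples, mem_ofPred_eq, comp_assoc,
    Subtype.val_injective.of_comp_iff]

theorem IsRepOn.restrictBase (hf : IsRepOn cA V f) (hP : ∀ s ∈ V, ∀ j, s j ∈ P) :
    IsRepOn cA (restrictTuples P V) (fun a => restrictTuples P (f a)) := by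
  have hV : V ⊆ range (Subtype.val ∘ · : (Fin n → P) → Fin n → U) :=
    fun s hs => exists_val_comp_eq (hP s hs)
  have hsub := hf.isSetHom.subset_unit
  refine IsSetHom.toRepOn ⟨?_, ?_, ?_, ?_, ?_⟩ fun a a' haa' => hf.inj ?_
  · rw [hf.map_top]
  · intro x y
    rw [hf.map_sup]
    exact preimage_union
  · intro x
    rw [hf.map_compl]
    exact preimage_sdiff _ _ _
  · intro i x
    ext s
    simp only [hf.map_c, cylOp, restrictTuples, mem_ofPred_eq]
    refine and_congr_right fun _ => ⟨fun ⟨t, ht, hts⟩ => ?_, fun ⟨t, ht, hts⟩ =>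
      ⟨Subtype.val ∘ t, ht, fun j hj => congrArg Subtype.val (hts j hj)⟩⟩
    obtain ⟨t', rfl⟩ := hV (hsub x ht)
    exact ⟨t', ht, fun j hj => Subtype.ext (hts j hj)⟩
  · intro i j
    ext s
    simp only [hf.map_d, diagSet, restrictTuples, mem_ofPred_eq, comp_apply, Subtype.ext_iff]
  · rw [← image_preimage_eq_of_subset ((hsub a).trans hV),
      ← image_preimage_eq_of_subset ((hsub a').trans hV)]
    exact congrArg _ haa'

theorem IsMSquare.restrictBase (hsq : IsMSquare n m cA V f) (hf : IsSetHom cA V f)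
    (hP : ∀ s ∈ V, ∀ j, s j ∈ P) :
    IsMSquare n m cA (restrictTuples P V) (fun a => restrictTuples P (f a)) := by
  intro s hs a i l hl hsl
  obtain ⟨t, ht, hts, htl⟩ :=
    hsq (Subtype.val ∘ s) (val_comp_mem_cliqueTuples_iff.2 hs) a i l hl hsl
  have htP : ∀ j, t j ∈ P := fun j => by
    by_cases hj : j = l i
    · rw [hj]
      exact hP _ (hf.subset_unit a htl) i
    · rw [hts j hj]
      exact (s j).2
  obtain ⟨t', rfl⟩ := exists_val_comp_eq htP
  exact ⟨t', val_comp_mem_cliqueTuples_iff.1 ht, fun j hj => Subtype.ext (hts j hj), htl⟩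

/-- Shrinking the base to the points that occur in the unit gives `BaseIsUnion`. -/
theorem IsRepOn.exists_baseIsUnion (hf : IsRepOn cA V f) (hsq : IsMSquare n m cA V f) :
    ∃ (U' : Type) (V' : Set (Fin n → U')) (f' : A → Set (Fin n → U')),
      IsRepOn cA V' f' ∧ BaseIsUnion V' ∧ IsMSquare n m cA V' f' := by
  let P : Set U := {u | ∃ s ∈ V, ∃ j, s j = u}
  have hP : ∀ s ∈ V, ∀ j, s j ∈ P := fun s hs j => ⟨s, hs, j, rfl⟩
  refine ⟨P, _, _, hf.restrictBase hP, fun u => ?_, hsq.restrictBase hf.isSetHom hP⟩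
  obtain ⟨s, hs, j, hsj⟩ := u.2
  obtain ⟨s', rfl⟩ := exists_val_comp_eq (hP s hs)
  exact ⟨s', hs, j, Subtype.ext hsj⟩

end RestrictBase

/-- In an ultrapower indexed by finite sets of kernel elements, the images of the kernel can be
avoided all at once: finitely many of them are avoided inside `f a` by the points of
`f (a ⊓ (y₁ ⊔ ⋯ ⊔ yₖ)ᶜ)`, which is nonempty when `h a ≠ ⊥`. -/
theorem ultrapowerSet_inter_avoidingUnit_eq_empty_iff {n : ℕ} {A B : Type} [BooleanAlgebra A]
    [BooleanAlgebra B] {cA : CylStruct (Fin n) A} {U : Type} {V : Set (Fin n → U)}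
    {f : A → Set (Fin n → U)} (hf : IsRepOn cA V f) {h : A → B} (hh : IsBoolHom h)
    {D : Ultrafilter (Finset {y // h y = ⊥})} (hD : (D : Filter (Finset {y // h y = ⊥})) ≤ atTop)
    (a : A) :
    ultrapowerSet D (f a) ∩
        avoidingUnit (ultrapowerSet D V) (ultrapowerSet D ∘ f) {y | h y = ⊥} = ∅ ↔
      h a = ⊥ := by
  refine ⟨fun hempty => ?_, fun ha => eq_empty_of_forall_notMem fun s hs => hs.2.2 a ha hs.1⟩
  by_contra ha
  have hfin : ∀ F : Finset {y // h y = ⊥}, ∃ p ∈ f a, ∀ y ∈ F, p ∉ f y.1 := by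
    intro F
    have hsup : h (F.sup Subtype.val) = ⊥ :=
      Finset.sup_induction (p := fun x => h x = ⊥) hh.map_bot
        (fun x hx y hy => by rw [hh.map_sup, hx, hy, sup_bot_eq]) fun y _ => y.2
    have hne : a ⊓ (F.sup Subtype.val)ᶜ ≠ ⊥ := fun hbot => ha <| by
      rw [← inf_top_eq (h a), ← compl_bot, ← hsup, ← hh.map_compl, ← hh.map_inf, hbot, hh.map_bot,
        hsup]
    obtain ⟨p, hp⟩ := nonempty_iff_ne_empty.2 fun he => hne (hf.inj (he.trans hf.map_bot.symm))
    rw [hf.isSetHom.map_inf_compl] at hp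
    exact ⟨p, hp.1, fun y hy hpy =>
      hp.2 (hf.isSetHom.monotone (Finset.le_sup (f := Subtype.val) hy) hpy)⟩
  obtain ⟨s, hs, hsF⟩ := exists_mem_ultrapowerSet_forall_notMem hD hfin
  refine (eq_empty_iff_forall_notMem.1 hempty) s ⟨hs, (hf.isSetHom.ultrapower D).subset_unit a hs,
    fun y hy => hsF ⟨y, hy⟩⟩

theorem m_square_representations_closed_under_homomorphic_images_general
    (n m : ℕ) (hn : 2 < n) {A B : Type}
    [BooleanAlgebra A] [BooleanAlgebra B]
    (cA : CylStruct (Fin n) A) (cB : CylStruct (Fin n) B)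
    (h : A → B) (hhom : IsCylHom cA cB h) (hsurj : Function.Surjective h)
    (hA : ∃ (U : Type) (V : Set (Fin n → U)) (f : A → Set (Fin n → U)),
      IsRepOn cA V f ∧ BaseIsUnion V ∧ IsMSquare n m cA V f) :
    ∃ (U : Type) (V : Set (Fin n → U)) (f : B → Set (Fin n → U)),
      IsRepOn cB V f ∧ BaseIsUnion V ∧ IsMSquare n m cB V f := by
  obtain ⟨U, V, f, hf, -, hsq⟩ := hA
  let D : Ultrafilter (Finset {y // h y = ⊥}) := .of atTop
  have hI : ∀ y ∈ {y | h y = ⊥}, ∀ i, cA.c i y ∈ {y | h y = ⊥} := fun y hy i => by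
    rw [mem_ofPred_eq, hhom.map_c, hy, cB.c_bot]
  have hF := hf.isSetHom.ultrapower D
  obtain ⟨g, hg, hgsq⟩ := (hF.inter_avoidingUnit hI).exists_factor_of_ker
    ((hsq.ultrapower D).inter_avoidingUnit hF hI (by omega)) hhom hsurj
    (ultrapowerSet_inter_avoidingUnit_eq_empty_iff hf hhom.bool (Ultrafilter.of_le atTop))
  exact hg.exists_baseIsUnion hgsq

/-- Let `2 < n < m < ω`.  If `A ∈ CA_n` has an `m`-square
representation and `h : A → B` is a surjective homomorphism of `CA_n`'s, then `B` has
an `m`-square representation.  (Together with closure under subalgebras and products,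
the class of `CA_n`'s having `m`-square representations is a variety.) -/
theorem m_square_representations_closed_under_homomorphic_images
    (n m : ℕ) (hn : 2 < n) (hm : n < m) {A B : Type}
    [BooleanAlgebra A] [BooleanAlgebra B]
    (cA : CylStruct (Fin n) A) (cB : CylStruct (Fin n) B)
    (h : A → B) (hhom : IsCylHom cA cB h) (hsurj : Function.Surjective h)
    (hA : ∃ (U : Type) (V : Set (Fin n → U)) (f : A → Set (Fin n → U)),
      IsRepOn cA V f ∧ BaseIsUnion V ∧ IsMSquare n m cA V f) :
    ∃ (U : Type) (V : Set (Fin n → U)) (f : B → Set (Fin n → U)),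
      IsRepOn cB V f ∧ BaseIsUnion V ∧ IsMSquare n m cB V f :=
  m_square_representations_closed_under_homomorphic_images_general n m hn cA cB h hhom hsurj hA
end

section
/- Let 2 < n < ω. Every completely representable CA_n is atomic and is a complete subalgebra of the n-neat reduct of an atomic CA_ω: CRCA_n ⊆ S_c Nr_n(CA_ω ∩ At) ∩ At, and consequently CRCA_n ⊆ S_c Nr_n CA_ω ∩ At. -/
/-!
A complete representation is atomic: for a point `p` of the unit, the elements whose image
misses `p` form a maximal ideal; completeness forbids its supremum to be `⊤`, so it has an
upper bound `u ≠ ⊤`, and then `uᶜ` is an atom containing `p`.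

A `Gs_n` unit `⋃ W ∈ 𝒦, ⁿW` is the set of `n`-sequences whose entries pairwise lie in a common
block of `𝒦`, a partial equivalence. The same relation defines the `Gs_ω` unit
`⋃ W ∈ 𝒦, ^ωW`, and pulling back along the restriction of `ω`-sequences to their first `n`
entries embeds the representation neatly into the full (hence atomic) set algebra on it. The
pull-back preserves unions, which is all that complete subalgebras need once the complete
representation has turned suprema into unions.
-/

variable {U : Type}

/-- The sequences indexed by `I` all of whose entries are pairwise related by `r`. For a
partial equivalence `r` this is the disjoint union of the cartesian spaces `ᴵW` over the
classes `W` of `r`. -/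
def blockUnit (r : U → U → Prop) (I : Type) : Set (I → U) := {s | ∀ i j, r (s i) (s j)}

section BlockAlgebra

variable (r : U → U → Prop) {I : Type}

def blockCyl (i : I) (X : Set (blockUnit r I)) : Set (blockUnit r I) :=
  {s | ∃ t ∈ X, ∀ j, j ≠ i → t.1 j = s.1 j}

def blockDiag (i j : I) : Set (blockUnit r I) := {s | s.1 i = s.1 j}

lemma blockCyl_inter_blockCyl (i : I) (X Y : Set (blockUnit r I)) :
    blockCyl r i (X ∩ blockCyl r i Y) = blockCyl r i X ∩ blockCyl r i Y := by
  ext s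
  constructor
  · rintro ⟨t, ⟨htX, u, huY, hu⟩, ht⟩
    exact ⟨⟨t, htX, ht⟩, u, huY, fun k hk => (hu k hk).trans (ht k hk)⟩
  · rintro ⟨⟨t, htX, ht⟩, u, huY, hu⟩
    exact ⟨t, ⟨htX, u, huY, fun k hk => (hu k hk).trans (ht k hk).symm⟩, ht⟩

lemma blockCyl_diag_inter_blockCyl_diag_compl {i j : I} (hij : i ≠ j)
    (X : Set (blockUnit r I)) :
    blockCyl r i (blockDiag r i j ∩ X) ∩ blockCyl r i (blockDiag r i j ∩ Xᶜ) = ∅ := by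
  refine Set.eq_empty_iff_forall_notMem.2 ?_
  rintro s ⟨⟨t, ⟨hti, htX⟩, ht⟩, u, ⟨hui, huX⟩, hu⟩
  have htu : t = u := by
    refine Subtype.ext (funext fun k => ?_)
    rcases eq_or_ne k i with rfl | hk
    · calc t.1 k = t.1 j := hti
        _ = s.1 j := ht j hij.symm
        _ = u.1 j := (hu j hij.symm).symm
        _ = u.1 k := hui.symm
    · rw [ht k hk, hu k hk]
  exact huX (htu ▸ htX)

variable [Std.Symm r] [IsTrans U r]

lemma update_mem_blockUnit [DecidableEq I] {s : I → U} (hs : s ∈ blockUnit r I) (i : I)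
    {u : U} {j : I} (hu : r u (s j)) : Function.update s i u ∈ blockUnit r I := by
  have hrel : ∀ a, r (Function.update s i u a) (s j) := by
    intro a
    rcases eq_or_ne a i with rfl | ha
    · simpa using hu
    · simpa [Function.update_of_ne ha] using hs a j
  exact fun a b => trans_of r (hrel a) (symm_of r (hrel b))

lemma blockCyl_blockCyl_subset (i j : I) (X : Set (blockUnit r I)) :
    blockCyl r i (blockCyl r j X) ⊆ blockCyl r j (blockCyl r i X) := by
  classical
  rcases eq_or_ne i j with rfl | hij
  · exact subset_rfl
  rintro s ⟨t, ⟨u, huX, hu⟩, ht⟩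
  -- `u j ∼ u i = t i ∼ t j = s j`
  have huj : r (u.1 j) (s.1 j) := by
    have := trans_of r (u.2 j i) (hu i hij ▸ t.2 i j)
    rwa [ht j hij.symm] at this
  refine ⟨⟨_, update_mem_blockUnit r s.2 j huj⟩, ⟨u, huX, fun k hk => ?_⟩, fun k hk => ?_⟩
  · rcases eq_or_ne k j with rfl | hkj
    · simp
    · simp [Function.update_of_ne hkj, hu k hkj, ht k hk]
  · simp [Function.update_of_ne hk]

lemma blockDiag_eq_blockCyl {i j k : I} (hki : k ≠ i) (hkj : k ≠ j) :
    blockDiag r i j = blockCyl r k (blockDiag r i k ∩ blockDiag r k j) := by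
  classical
  ext s
  constructor
  · intro hs
    refine ⟨⟨_, update_mem_blockUnit r s.2 k (s.2 i i)⟩, ⟨?_, ?_⟩, fun m hm => ?_⟩
    · simp [blockDiag, Function.update_of_ne hki.symm]
    · simpa [blockDiag, Function.update_of_ne hkj.symm] using hs
    · simp [Function.update_of_ne hm]
  · rintro ⟨t, ⟨hik, hkj'⟩, ht⟩
    change s.1 i = s.1 j
    rw [← ht i hki.symm, ← ht j hkj.symm]
    exact hik.trans hkj'

def blockCylStruct : CylStruct I (Set (blockUnit r I)) where
  c := blockCyl r
  d := blockDiag r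
  c_bot i := by simp [blockCyl]
  le_c _ _ s hs := ⟨s, hs, fun _ _ => rfl⟩
  c_inf_c := blockCyl_inter_blockCyl r
  c_comm i j X := (blockCyl_blockCyl_subset r i j X).antisymm (blockCyl_blockCyl_subset r j i X)
  d_diag i := by ext; simp [blockDiag]
  d_exch _ _ _ := blockDiag_eq_blockCyl r
  d_cell _ _ X hij := blockCyl_diag_inter_blockCyl_diag_compl r hij X

end BlockAlgebra

lemma IsGsUnit.exists_eq_blockUnit {n : ℕ} {V : Set (Fin n → U)} (hV : IsGsUnit V)
    (hn : n ≠ 0) :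
    ∃ r : U → U → Prop, Std.Symm r ∧ IsTrans U r ∧ V = blockUnit r (Fin n) := by
  obtain ⟨𝒦, -, h𝒦, rfl⟩ := hV
  have hsame : ∀ {W W'}, W ∈ 𝒦 → W' ∈ 𝒦 → ∀ {u}, u ∈ W → u ∈ W' → W = W' :=
    fun hW hW' _ hu hu' => by_contra fun hne => Set.disjoint_left.1 (h𝒦 _ hW _ hW' hne) hu hu'
  refine ⟨fun u v => ∃ W ∈ 𝒦, u ∈ W ∧ v ∈ W, ⟨fun _ _ ⟨W, hW, hu, hv⟩ => ⟨W, hW, hv, hu⟩⟩,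
    ⟨fun _ _ _ ⟨W, hW, hu, hv⟩ ⟨W', hW', hv', hw⟩ => ⟨W, hW, hu, hsame hW' hW hv' hv ▸ hw⟩⟩, ?_⟩
  ext p
  simp only [Set.mem_iUnion, blockUnit, exists_prop]
  constructor
  · rintro ⟨W, hW, hp⟩ i j
    exact ⟨W, hW, hp i, hp j⟩
  · intro hp
    let i₀ : Fin n := ⟨0, Nat.pos_of_ne_zero hn⟩
    obtain ⟨W, hW, hW₀, -⟩ := hp i₀ i₀
    refine ⟨W, hW, fun i => ?_⟩
    obtain ⟨W', hW', h₀, hi⟩ := hp i₀ i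
    exact hsame hW' hW h₀ hW₀ ▸ hi

namespace IsRepOn

variable {n : ℕ} {A : Type} [BooleanAlgebra A] {cA : CylStruct (Fin n) A}
  {V : Set (Fin n → U)} {f : A → Set (Fin n → U)}

lemma subset (hf : IsRepOn cA V f) (x : A) : f x ⊆ V :=
  calc f x ⊆ f x ∪ f xᶜ := Set.subset_union_left
    _ = V := by rw [← hf.map_sup, sup_compl_eq_top, hf.map_top]

lemma map_inf (hf : IsRepOn cA V f) (x y : A) : f (x ⊓ y) = f x ∩ f y := by
  have hx := hf.subset x
  have hy := hf.subset y
  rw [← compl_compl (x ⊓ y), compl_inf, hf.map_compl, hf.map_sup, hf.map_compl, hf.map_compl]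
  ext p
  simp only [Set.mem_sdiff, Set.mem_union, Set.mem_inter_iff]
  have := @hx p
  have := @hy p
  tauto

lemma nonempty (hf : IsRepOn cA V f) {x : A} (hx : x ≠ ⊥) : (f x).Nonempty :=
  Set.nonempty_iff_ne_empty.2 fun h => hx (hf.inj (h.trans hf.map_bot.symm))

lemma isAtom_compl_of_mem_upperBounds (hf : IsRepOn cA V f) {p : Fin n → U} {u : A}
    (hu : u ∈ upperBounds {x | p ∉ f x}) (hu_ne : u ≠ ⊤) : IsAtom uᶜ := by
  have below_bot : ∀ y ≤ uᶜ, p ∉ f y → y = ⊥ := fun y hy hp =>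
    le_bot_iff.1 (le_inf (hu hp) hy |>.trans inf_compl_eq_bot.le)
  refine ⟨mt compl_eq_bot.1 hu_ne, fun y hy => ?_⟩
  by_cases hp : p ∈ f y
  · -- `uᶜ ⊓ yᶜ` misses `p`, so it lies below `u` as well as `uᶜ`
    have hdiff : uᶜ ⊓ yᶜ = ⊥ := below_bot _ inf_le_left fun h => by
      rw [hf.map_inf, hf.map_compl y] at h
      exact h.2.2 hp
    exact absurd (hy.le.antisymm (disjoint_compl_right_iff.1 (disjoint_iff.2 hdiff))) hy.ne
  · exact below_bot y hy.le hp

lemma isAtomic (hf : IsRepOn cA V f)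
    (hcomp : ∀ (S : Set A) (a : A), IsLUB S a → f a = ⋃ s ∈ S, f s) : IsAtomic A := by
  refine ⟨fun b => or_iff_not_imp_left.2 fun hb => ?_⟩
  obtain ⟨p, hpb⟩ := hf.nonempty hb
  obtain ⟨u, hu, hu_ne⟩ : ∃ u ∈ upperBounds {x | p ∉ f x}, u ≠ ⊤ := by
    by_contra! htop
    have hcover := hcomp _ ⊤ ⟨fun _ _ => le_top, fun u hu => (htop u hu).ge⟩
    have hpV : p ∈ f ⊤ := hf.map_top ▸ hf.subset b hpb
    simp only [hcover, Set.mem_iUnion] at hpV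
    obtain ⟨x, hx, hpx⟩ := hpV
    exact hx hpx
  have hbc : bᶜ ≤ u := hu fun h => (hf.map_compl b ▸ h).2 hpb
  exact ⟨uᶜ, hf.isAtom_compl_of_mem_upperBounds hu hu_ne, compl_le_iff_compl_le.1 hbc⟩

end IsRepOn

section NeatEmbedding

variable {r : U → U → Prop} (n : ℕ)

def restrictFin (s : blockUnit r ℕ) : Fin n → U := fun i => s.1 i

lemma restrictFin_mem (s : blockUnit r ℕ) : restrictFin n s ∈ blockUnit r (Fin n) :=
  fun i j => s.2 i j

lemma range_restrictFin (hn : n ≠ 0) :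
    Set.range (restrictFin (r := r) n) = blockUnit r (Fin n) := by
  refine (Set.range_subset_iff.2 (restrictFin_mem n)).antisymm fun p hp => ?_
  have hpos := Nat.pos_of_ne_zero hn
  refine ⟨⟨fun k => p ⟨k % n, Nat.mod_lt k hpos⟩, fun _ _ => hp _ _⟩, funext fun i => ?_⟩
  simp [restrictFin, Nat.mod_eq_of_lt i.isLt]

lemma preimage_diagSet (i j : Fin n) :
    restrictFin n ⁻¹' diagSet (blockUnit r (Fin n)) i j = blockDiag r (i : ℕ) j := by
  ext s
  exact and_iff_right (restrictFin_mem n s)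

lemma blockCyl_preimage_of_le (X : Set (Fin n → U)) {k : ℕ} (hk : n ≤ k) :
    blockCyl r k (restrictFin n ⁻¹' X) = restrictFin n ⁻¹' X := by
  refine subset_antisymm ?_ fun s hs => ⟨s, hs, fun _ _ => rfl⟩
  rintro s ⟨t, ht, hts⟩
  have : restrictFin n t = restrictFin n s := funext fun j => hts j (by omega)
  rwa [Set.mem_preimage, ← this]

variable {n} [Std.Symm r] [IsTrans U r]

lemma preimage_cylOp (hn : 2 ≤ n) {X : Set (Fin n → U)}
    (hX : X ⊆ blockUnit r (Fin n)) (i : Fin n) :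
    restrictFin n ⁻¹' cylOp (blockUnit r (Fin n)) i X =
      blockCyl r (i : ℕ) (restrictFin n ⁻¹' X) := by
  classical
  ext s
  constructor
  · rintro ⟨-, t, htX, hts⟩
    -- `t` agrees with `s` at some coordinate `m ≠ i`, so `t i` lies in the block of `s`
    have : Nontrivial (Fin n) := Fin.nontrivial_iff_two_le.2 hn
    obtain ⟨m, hmi⟩ := exists_ne i
    have hti : r (t i) (restrictFin n s m) := hts m hmi ▸ hX htX i m
    refine ⟨⟨_, update_mem_blockUnit r s.2 i hti⟩, ?_, fun k hk => by simp [hk]⟩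
    change restrictFin n _ ∈ X
    convert htX using 1
    funext j
    rcases eq_or_ne j i with rfl | hj
    · simp [restrictFin]
    · simp [restrictFin, Fin.val_ne_iff.2 hj, hts j hj]
  · rintro ⟨t, ht, hts⟩
    exact ⟨restrictFin_mem n s, restrictFin n t, ht,
      fun j hj => hts j (Fin.val_ne_iff.2 hj)⟩

theorem isNeatEmbedNat_preimage (hn : 2 ≤ n) {A : Type} [BooleanAlgebra A]
    {cA : CylStruct (Fin n) A} {f : A → Set (Fin n → U)}
    (hf : IsRepOn cA (blockUnit r (Fin n)) f) :
    IsNeatEmbedNat n cA (blockCylStruct r) (fun a => restrictFin n ⁻¹' f a) where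
  bool :=
    { map_bot := by simp [hf.map_bot]
      map_top := by
        rw [hf.map_top, Set.top_eq_univ, Set.preimage_eq_univ_iff, range_restrictFin n (by omega)]
      map_sup x y := by simp [hf.map_sup]
      map_inf x y := by simp [hf.map_inf]
      map_compl x := by
        ext s
        simp [hf.map_compl, restrictFin_mem n s] }
  inj a b hab := by
    rw [← range_restrictFin n (by omega)] at hf
    exact hf.inj ((Set.preimage_eq_preimage' (hf.subset a) (hf.subset b)).1 hab)
  map_c i x := by
    simp only [hf.map_c, preimage_cylOp hn (hf.subset x)]
    rfl
  map_d i j := by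
    simp only [hf.map_d, preimage_diagSet]
    rfl
  range_sub := by
    rintro _ ⟨a, rfl⟩ k hk
    exact blockCyl_preimage_of_le n (f a) hk

end NeatEmbedding

/-- Let `2 < n < ω`.  Every completely representable `CA_n` is atomic
and is a complete subalgebra of the `n`-neat reduct of an atomic `CA_ω`:
`CRCA_n ⊆ S_c Nr_n (CA_ω ∩ At) ∩ At`; consequently `CRCA_n ⊆ S_c Nr_n CA_ω ∩ At`. -/
theorem completely_representable_subset_Sc_nr_atomic (n : ℕ) (hn : 2 < n)
    {A : Type} [BooleanAlgebra A] (cA : CylStruct (Fin n) A)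
    (hA : CompletelyRepresentable n cA) :
    IsAtomic A ∧
    ∃ (B : CAlg ℕ) (f : A → B.carrier),
      IsAtomic B.carrier ∧ IsNeatEmbedNat n cA B.str f ∧
      ∀ S : Set A, IsLUB S ⊤ →
        ∀ b ∈ nrSetNat n B.str, (∀ s ∈ S, f s ≤ b) → b = ⊤ := by
  obtain ⟨U, V, f, hV, hf, hcomp⟩ := hA
  obtain ⟨r, _, _, rfl⟩ := hV.exists_eq_blockUnit (by omega)
  refine ⟨hf.isAtomic hcomp, ⟨Set (blockUnit r ℕ), blockCylStruct r⟩,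
    fun a => restrictFin n ⁻¹' f a, inferInstance, isNeatEmbedNat_preimage (by omega) hf, ?_⟩
  intro S hS b _ hb
  refine eq_top_iff.2 fun s _ => ?_
  have hs : restrictFin n s ∈ ⋃ x ∈ S, f x := hcomp S ⊤ hS ▸ hf.map_top ▸ restrictFin_mem n s
  simp only [Set.mem_iUnion] at hs
  obtain ⟨x, hx, hsx⟩ := hs
  exact hb x hx hsx
end

section
/- Let 2 < n < ω. Then CRCA_n = S_c P FCs_n: a CA_n is completely representable if and only if it is isomorphic to a complete subalgebra of a direct product of full cylindric set algebras ℘(ⁿU_i). -/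
/-- Cylindrification in a full cylindric set algebra `℘(ⁿU)`. -/
def fullC {n : ℕ} {U : Type} (i : Fin n) (X : Set (Fin n → U)) : Set (Fin n → U) :=
  {s | ∃ t ∈ X, ∀ j, j ≠ i → t j = s j}

/-- Diagonal elements in a full cylindric set algebra `℘(ⁿU)`. -/
def fullD {n : ℕ} {U : Type} (i j : Fin n) : Set (Fin n → U) :=
  {s | s i = s j}

/-!
Let the unit of a generalized set algebra be `⋃ₖ ⁿUₖ` with the `Uₖ` pairwise disjoint. Since
`n ≥ 2`, a sequence differing from one in `ⁿUₖ` in a single coordinate still lies in `ⁿUₖ`, so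
cylindrification acts square by square and the Gs is the same thing as a subalgebra of
`∏ₖ ℘(ⁿUₖ)` (taking the traces on the squares one way, the disjoint union of the `Uₖ` the other).
Unions are computed componentwise on both sides, so complete representations correspond to
embeddings preserving all joins. For a Boolean homomorphism it suffices to preserve the joins equal
to `⊤`, because `⨆ S = a` if and only if `⨆ (S ∪ {aᶜ}) = ⊤`.
-/

open Set

theorem IsLUB.insert_compl {A : Type*} [BooleanAlgebra A] {S : Set A} {a : A} (hS : IsLUB S a) :
    IsLUB (insert aᶜ S) ⊤ := by
  simpa using hS.insert aᶜ

theorem isLUB_image_of_forall_isLUB_top {A B : Type*} [BooleanAlgebra A] [BooleanAlgebra B]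
    {h : A → B} (map_sup : ∀ x y, h (x ⊔ y) = h x ⊔ h y) (map_compl : ∀ x, h xᶜ = (h x)ᶜ)
    (isLUB_top : ∀ S : Set A, IsLUB S ⊤ → IsLUB (h '' S) ⊤) {S : Set A} {a : A}
    (hS : IsLUB S a) : IsLUB (h '' S) (h a) := by
  have mono : Monotone h := fun x y hxy => by
    rw [← sup_eq_right.2 hxy, map_sup]
    exact le_sup_left
  refine ⟨mono.mem_upperBounds_image hS.1, fun b hb => ?_⟩
  have hub : b ⊔ (h a)ᶜ ∈ upperBounds (h '' insert aᶜ S) := by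
    rintro _ ⟨x, rfl | hx, rfl⟩
    · rw [map_compl]
      exact le_sup_right
    · exact le_sup_of_le_left (hb (mem_image_of_mem h hx))
  have hcodisj : Codisjoint b (h a)ᶜ :=
    codisjoint_iff_le_sup.2 ((isLUB_top _ hS.insert_compl).2 hub)
  simpa using codisjoint_iff_compl_le_left.1 hcodisj

theorem isLUB_image_iff_iUnion_eq {α ι : Type*} {U : ι → Type*} (F : α → ∀ i, Set (U i))
    (S : Set α) (G : ∀ i, Set (U i)) : IsLUB (F '' S) G ↔ ∀ i, ⋃ x ∈ S, F x i = G i := by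
  rw [isLUB_iff_sSup_eq, sSup_image, eq_comm, funext_iff]
  simp only [iSup_apply, iSup_eq_iUnion, eq_comm]

variable {n : ℕ} {A : Type} [BooleanAlgebra A]

theorem IsRepOn.mono {U : Type} {V : Set (Fin n → U)} {f : A → Set (Fin n → U)}
    {cA : CylStruct (Fin n) A} (hf : IsRepOn cA V f) {a b : A} (hab : a ≤ b) : f a ⊆ f b := by
  rw [← sup_eq_right.2 hab, hf.map_sup]
  exact subset_union_left

theorem IsRepOn.subset_s18 {U : Type} {V : Set (Fin n → U)} {f : A → Set (Fin n → U)}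
    {cA : CylStruct (Fin n) A} (hf : IsRepOn cA V f) (a : A) : f a ⊆ V :=
  hf.map_top ▸ hf.mono le_top

section Restriction

variable {U : Type} {𝒦 : Set (Set U)}

def restrictSq (X : Set (Fin n → U)) (W : Set U) : Set (Fin n → W) :=
  (fun s j => (s j : U)) ⁻¹' X

variable {V : Set (Fin n → U)}

theorem restrictSq_eq_univ (hV : V = ⋃ W ∈ 𝒦, {s | ∀ i, s i ∈ W}) {W : Set U} (hW : W ∈ 𝒦) :
    restrictSq V W = univ :=
  eq_univ_of_forall fun s => hV ▸ mem_biUnion hW fun i => (s i).2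

theorem subset_of_restrictSq_subset (hV : V = ⋃ W ∈ 𝒦, {s | ∀ i, s i ∈ W})
    {X Y : Set (Fin n → U)} (hX : X ⊆ V) (h : ∀ W ∈ 𝒦, restrictSq X W ⊆ restrictSq Y W) :
    X ⊆ Y := by
  intro s hs
  obtain ⟨W, hW, hsW⟩ := mem_iUnion₂.1 (hV ▸ hX hs)
  exact h W hW (show (fun i => (⟨s i, hsW i⟩ : W)) ∈ restrictSq X W from hs)

theorem restrictSq_cylOp [Nontrivial (Fin n)] (hdisj : 𝒦.PairwiseDisjoint id)
    (hV : V = ⋃ W ∈ 𝒦, {s | ∀ i, s i ∈ W}) {W : Set U} (hW : W ∈ 𝒦) (i : Fin n)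
    {X : Set (Fin n → U)} (hX : X ⊆ V) :
    restrictSq (cylOp V i X) W = fullC i (restrictSq X W) := by
  ext s
  simp only [restrictSq, cylOp, fullC, mem_preimage, mem_ofPred_eq]
  constructor
  · rintro ⟨-, t, htX, hts⟩
    obtain ⟨W', hW', htW'⟩ := mem_iUnion₂.1 (hV ▸ hX htX)
    obtain ⟨j, hj⟩ := exists_ne i
    have hWW' : W' = W := by
      by_contra hne
      exact disjoint_left.1 (hdisj hW' hW hne) (htW' j) (hts j hj ▸ (s j).2)
    subst hWW'
    exact ⟨fun j => ⟨t j, htW' j⟩, htX, fun j hj => Subtype.ext (hts j hj)⟩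
  · rintro ⟨t, htX, hts⟩
    exact ⟨hV ▸ mem_biUnion hW fun j => (s j).2, _, htX,
      fun j hj => congrArg Subtype.val (hts j hj)⟩

theorem restrictSq_diff (hV : V = ⋃ W ∈ 𝒦, {s | ∀ i, s i ∈ W}) {W : Set U} (hW : W ∈ 𝒦)
    (X : Set (Fin n → U)) : restrictSq (V \ X) W = (restrictSq X W)ᶜ := by
  rw [restrictSq, preimage_sdiff, ← restrictSq, restrictSq_eq_univ hV hW, ← compl_eq_univ_sdiff]
  rfl

theorem restrictSq_diagSet (hV : V = ⋃ W ∈ 𝒦, {s | ∀ i, s i ∈ W}) {W : Set U} (hW : W ∈ 𝒦)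
    (i j : Fin n) : restrictSq (diagSet V i j) W = fullD i j := by
  ext s
  simp only [restrictSq, diagSet, fullD, mem_preimage, mem_ofPred_eq, Subtype.ext_iff]
  exact and_iff_right (hV ▸ mem_biUnion hW fun j => (s j).2)

end Restriction

section Sigma

variable {I : Type} {U : I → Type}

def sigmaSeq (i : I) (t : Fin n → U i) : Fin n → Σ i, U i := fun j => ⟨i, t j⟩

/-- The product `∏ i, ℘(ⁿU_i)` is modelled inside `℘(ⁿ(Σ i, U i))` by sending a family `X` to
the union of the copies of the `X i`. -/
def sigmaSet (X : ∀ i, Set (Fin n → U i)) : Set (Fin n → Σ i, U i) :=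
  ⋃ i, sigmaSeq i '' X i

theorem sigmaSeq_mem_sigmaSet_iff [Nonempty (Fin n)] {X : ∀ i, Set (Fin n → U i)} {i : I}
    {t : Fin n → U i} : sigmaSeq i t ∈ sigmaSet X ↔ t ∈ X i := by
  refine ⟨fun h => ?_, fun h => mem_iUnion.2 ⟨i, mem_image_of_mem _ h⟩⟩
  obtain ⟨i', t', ht', heq⟩ := mem_iUnion.1 h
  obtain rfl : i' = i := congrArg Sigma.fst (congrFun heq (Classical.arbitrary _))
  obtain rfl : t' = t := funext fun j => sigma_mk_injective (congrFun heq j)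
  exact ht'

theorem sigmaSet_injective [Nonempty (Fin n)] :
    Function.Injective (sigmaSet : (∀ i, Set (Fin n → U i)) → _) := fun X Y h =>
  funext fun i => ext fun t => by rw [← sigmaSeq_mem_sigmaSet_iff, h, sigmaSeq_mem_sigmaSet_iff]

theorem sigmaSet_bot : sigmaSet (⊥ : ∀ i, Set (Fin n → U i)) = ∅ := by
  simp [sigmaSet]

theorem sigmaSet_sup (X Y : ∀ i, Set (Fin n → U i)) :
    sigmaSet (X ⊔ Y) = sigmaSet X ∪ sigmaSet Y := by
  simp only [sigmaSet, Pi.sup_apply, sup_eq_union, image_union, iUnion_union_distrib]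

theorem sigmaSet_compl [Nonempty (Fin n)] (X : ∀ i, Set (Fin n → U i)) :
    sigmaSet Xᶜ = sigmaSet ⊤ \ sigmaSet X := by
  ext s
  constructor
  · intro hs
    obtain ⟨i, t, ht, rfl⟩ := mem_iUnion.1 hs
    rw [mem_sdiff, sigmaSeq_mem_sigmaSet_iff, sigmaSeq_mem_sigmaSet_iff]
    exact ⟨trivial, ht⟩
  · rintro ⟨hs, hsX⟩
    obtain ⟨i, t, -, rfl⟩ := mem_iUnion.1 hs
    rw [sigmaSeq_mem_sigmaSet_iff] at hsX ⊢
    exact hsX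

theorem sigmaSet_iUnion₂ {α : Type*} (F : α → ∀ i, Set (Fin n → U i)) (S : Set α) :
    sigmaSet (fun i => ⋃ x ∈ S, F x i) = ⋃ x ∈ S, sigmaSet (F x) := by
  ext s
  simp only [sigmaSet, image_iUnion₂, mem_iUnion]
  exact ⟨fun ⟨i, x, hx, h⟩ => ⟨x, hx, i, h⟩, fun ⟨x, hx, i, h⟩ => ⟨i, x, hx, h⟩⟩

theorem cylOp_sigmaSet [Nontrivial (Fin n)] (j : Fin n) (X : ∀ i, Set (Fin n → U i)) :
    cylOp (sigmaSet ⊤) j (sigmaSet X) = sigmaSet fun i => fullC j (X i) := by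
  ext s
  constructor
  · rintro ⟨hs, u, hu, hus⟩
    obtain ⟨i, t, -, rfl⟩ := mem_iUnion.1 hs
    obtain ⟨i', t', ht', rfl⟩ := mem_iUnion.1 hu
    obtain ⟨k, hk⟩ := exists_ne j
    obtain rfl : i' = i := congrArg Sigma.fst (hus k hk)
    exact mem_iUnion.2 ⟨i', t, ⟨t', ht', fun k hk => sigma_mk_injective (hus k hk)⟩, rfl⟩
  · intro hs
    obtain ⟨i, t, ⟨t', ht', htt'⟩, rfl⟩ := mem_iUnion.1 hs
    refine ⟨mem_iUnion.2 ⟨i, t, trivial, rfl⟩, sigmaSeq i t', ?_, fun k hk => ?_⟩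
    · exact mem_iUnion.2 ⟨i, t', ht', rfl⟩
    · simp only [sigmaSeq, htt' k hk]

theorem diagSet_sigmaSet_top [Nonempty (Fin n)] (j k : Fin n) :
    diagSet (sigmaSet (⊤ : ∀ i, Set (Fin n → U i))) j k = sigmaSet fun _ => fullD j k := by
  ext s
  constructor
  · rintro ⟨hs, hjk⟩
    obtain ⟨i, t, -, rfl⟩ := mem_iUnion.1 hs
    exact mem_iUnion.2 ⟨i, t, sigma_mk_injective hjk, rfl⟩
  · intro hs
    obtain ⟨i, t, hjk, rfl⟩ := mem_iUnion.1 hs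
    exact ⟨mem_iUnion.2 ⟨i, t, trivial, rfl⟩, congrArg (Sigma.mk i) hjk⟩

theorem isGsUnit_sigmaSet_top (hU : ∀ i, Nonempty (U i)) :
    IsGsUnit (sigmaSet (⊤ : ∀ i, Set (Fin n → U i))) := by
  refine ⟨range fun i => {u | u.1 = i}, ?_, ?_, ?_⟩
  · rintro _ ⟨i, rfl⟩
    obtain ⟨u⟩ := hU i
    exact ⟨⟨i, u⟩, rfl⟩
  · rintro _ ⟨i, rfl⟩ _ ⟨i', rfl⟩ hne
    refine disjoint_left.2 fun u (hu : u.1 = i) (hu' : u.1 = i') => hne ?_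
    rw [← hu, ← hu']
  · ext s
    constructor
    · intro hs
      obtain ⟨i, t, -, rfl⟩ := mem_iUnion.1 hs
      exact mem_biUnion ⟨i, rfl⟩ fun j => rfl
    · intro hs
      obtain ⟨_, ⟨i, rfl⟩, hs⟩ := mem_iUnion₂.1 hs
      refine mem_iUnion.2 ⟨i, fun j => hs j ▸ (s j).2, trivial, funext fun j => ?_⟩
      exact Sigma.ext (hs j).symm (eqRec_heq _ _)

end Sigma

/-- `f` witnesses `A ∈ S_c P FCs_n`. -/
structure IsCompleteFullProdEmbedding (cA : CylStruct (Fin n) A) {I : Type} {U : I → Type}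
    (f : A → ∀ i, Set (Fin n → U i)) : Prop where
  inj : Function.Injective f
  map_bot : f ⊥ = ⊥
  map_top : f ⊤ = ⊤
  map_sup : ∀ x y, f (x ⊔ y) = f x ⊔ f y
  map_compl : ∀ x, f xᶜ = (f x)ᶜ
  map_c : ∀ (j : Fin n) (x : A), f (cA.c j x) = fun i => fullC j (f x i)
  map_d : ∀ j k : Fin n, f (cA.d j k) = fun _ => fullD j k
  isLUB_top : ∀ S : Set A, IsLUB S ⊤ → IsLUB (f '' S) ⊤

theorem CompletelyRepresentable.exists_isCompleteFullProdEmbedding [Nontrivial (Fin n)]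
    {cA : CylStruct (Fin n) A} (h : CompletelyRepresentable n cA) :
    ∃ (I : Type) (U : I → Type) (f : A → ∀ i, Set (Fin n → U i)),
      (∀ i, Nonempty (U i)) ∧ IsCompleteFullProdEmbedding cA f := by
  obtain ⟨U, V, f, ⟨𝒦, hne, hdisj, hV⟩, hf, hcompl⟩ := h
  refine ⟨𝒦, fun W => W.1, fun a W => restrictSq (f a) W, fun W => (hne W W.2).to_subtype,
    ⟨fun a b hab => ?_, ?_, ?_, fun x y => ?_, fun x => ?_, fun j x => ?_, fun j k => ?_,
      fun S hS => ?_⟩⟩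
  · exact hf.inj <| (subset_of_restrictSq_subset hV (hf.subset_s18 a)
      fun W hW => (congrFun hab ⟨W, hW⟩).le).antisymm
      (subset_of_restrictSq_subset hV (hf.subset_s18 b) fun W hW => (congrFun hab ⟨W, hW⟩).ge)
  · funext W
    rw [hf.map_bot]
    rfl
  · funext W
    rw [hf.map_top]
    exact restrictSq_eq_univ hV W.2
  · funext W
    rw [hf.map_sup]
    rfl
  · funext W
    rw [hf.map_compl]
    exact restrictSq_diff hV W.2 _
  · funext W
    rw [hf.map_c]
    exact restrictSq_cylOp hdisj hV W.2 j (hf.subset_s18 x)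
  · funext W
    rw [hf.map_d]
    exact restrictSq_diagSet hV W.2 j k
  · refine (isLUB_image_iff_iUnion_eq _ S ⊤).2 fun W => ?_
    calc ⋃ x ∈ S, restrictSq (f x) W = restrictSq (⋃ x ∈ S, f x) W := preimage_iUnion₂.symm
      _ = univ := by
        rw [← hcompl S ⊤ hS, hf.map_top]
        exact restrictSq_eq_univ hV W.2

theorem IsCompleteFullProdEmbedding.completelyRepresentable [Nontrivial (Fin n)]
    {cA : CylStruct (Fin n) A} {I : Type} {U : I → Type} (hU : ∀ i, Nonempty (U i))
    {f : A → ∀ i, Set (Fin n → U i)} (hf : IsCompleteFullProdEmbedding cA f) :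
    CompletelyRepresentable n cA := by
  refine ⟨Σ i, U i, sigmaSet ⊤, fun a => sigmaSet (f a), isGsUnit_sigmaSet_top hU,
    ⟨sigmaSet_injective.comp hf.inj, ?_, ?_, fun x y => ?_, fun x => ?_, fun j x => ?_,
      fun j k => ?_⟩, fun S a hS => ?_⟩
  · rw [hf.map_top]
  · rw [hf.map_bot, sigmaSet_bot]
  · rw [hf.map_sup, sigmaSet_sup]
  · rw [hf.map_compl, sigmaSet_compl]
  · rw [hf.map_c, cylOp_sigmaSet]
  · rw [hf.map_d, diagSet_sigmaSet_top]
  · have hfS := isLUB_image_of_forall_isLUB_top hf.map_sup hf.map_compl hf.isLUB_top hS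
    rw [← sigmaSet_iUnion₂, funext ((isLUB_image_iff_iUnion_eq f S (f a)).1 hfS)]

/-- Let `2 < n < ω`.  Then `CRCA_n = S_c P FCs_n`: a `CA_n` is
completely representable if and only if it embeds, as a complete subalgebra, into a
direct product of full cylindric set algebras `℘(ⁿU_i)`. -/
theorem completely_representable_iff_Sc_prod_full (n : ℕ) (hn : 2 < n)
    {A : Type} [BooleanAlgebra A] (cA : CylStruct (Fin n) A) :
    CompletelyRepresentable n cA ↔
    ∃ (I : Type) (U : I → Type) (f : A → ∀ i, Set (Fin n → U i)),
      (∀ i, Nonempty (U i)) ∧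
      Function.Injective f ∧
      f ⊥ = ⊥ ∧ f ⊤ = ⊤ ∧
      (∀ x y, f (x ⊔ y) = f x ⊔ f y) ∧
      (∀ x, f xᶜ = (f x)ᶜ) ∧
      (∀ (j : Fin n) (x : A), f (cA.c j x) = fun i => fullC j (f x i)) ∧
      (∀ j k : Fin n, f (cA.d j k) = fun i => fullD j k) ∧
      (∀ S : Set A, IsLUB S ⊤ → IsLUB (f '' S) ⊤) := by
  have : Nontrivial (Fin n) := Fin.nontrivial_iff_two_le.2 hn.le
  constructor
  · intro h
    obtain ⟨I, U, f, hU, hf⟩ := h.exists_isCompleteFullProdEmbedding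
    exact ⟨I, U, f, hU, hf.inj, hf.map_bot, hf.map_top, hf.map_sup, hf.map_compl, hf.map_c,
      hf.map_d, hf.isLUB_top⟩
  · rintro ⟨I, U, f, hU, inj, map_bot, map_top, map_sup, map_compl, map_c, map_d, isLUB_top⟩
    exact IsCompleteFullProdEmbedding.completelyRepresentable hU
      ⟨inj, map_bot, map_top, map_sup, map_compl, map_c, map_d, isLUB_top⟩
end
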